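/- (Tightness of the power constraint at the optimum.) Assume p_max < P_th and the set of LP-feasible families is nonempty, and let y* be LP-feasible with D̄(y*) ≤ D̄(y) for all LP-feasible y. Then the average power constraint is tight at y*: P̄(y*) = p_max. (Otherwise a convex combination of y* with the zero-delay point y⁰ given by y⁰_{0,m} = 1 and y⁰_{i,m} = 0 for i ≥ 1 would be LP-feasible with strictly smaller delay.) -/

import Mathlib

/-- LP feasibility (problem (17) of the paper): with the convention
`y (Q+1) m = 0`, the family `y` satisfies the power constraint (a),
the normalization constraint (b), and the inequality constraints (c). -/
def LPfeasible (Q M : ℕ) (α ξ : ℝ) (η Pw : ℕ → ℝ) (pmax : ℝ)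
    (y : ℕ → ℕ → ℝ) : Prop :=
  (∀ m ∈ Finset.Icc 1 M, y (Q + 1) m = 0) ∧
  (α * ∑ i ∈ Finset.range (Q + 1), ∑ m ∈ Finset.Icc 1 M, η m * Pw m * y i m ≤ pmax) ∧
  (∑ i ∈ Finset.range (Q + 1), ∑ m ∈ Finset.Icc 1 M, η m * y i m = 1) ∧
  (∀ i, i ≤ Q → ∀ m ∈ Finset.Icc 1 M,
    0 ≤ y i m ∧
    y i m ≤ ∑ n ∈ Finset.Icc 1 M, η n * y i n +
      ξ * ∑ n ∈ Finset.Icc 1 M, η n * y (i + 1) n)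

/-- Average queueing delay `D̄(y) = (1/α) Σ_i Σ_m i·η_m·y_{i,m}`. -/
noncomputable def avgDelay (Q M : ℕ) (α : ℝ) (η : ℕ → ℝ) (y : ℕ → ℕ → ℝ) : ℝ :=
  (1 / α) * ∑ i ∈ Finset.range (Q + 1), ∑ m ∈ Finset.Icc 1 M, (i : ℝ) * η m * y i m

/-- Average power `P̄(y) = α Σ_i Σ_m η_m·P_m·y_{i,m}`. -/
noncomputable def avgPower (Q M : ℕ) (α : ℝ) (η Pw : ℕ → ℝ) (y : ℕ → ℕ → ℝ) : ℝ :=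
  α * ∑ i ∈ Finset.range (Q + 1), ∑ m ∈ Finset.Icc 1 M, η m * Pw m * y i m

/-!
If the power constraint were slack at a delay-optimal `y`, mixing `y` with a little of the
point `y⁰` concentrated on the empty buffer (delay `0`, power `P_th`) would stay feasible,
since the constraints are linear, and would scale the delay by a factor `1 - t < 1`. This
contradicts optimality because the delay of `y` is positive: a feasible point of delay `0`
is `y⁰` itself, whose power `P_th` exceeds `p_max`.
-/

open Finset

def zeroDelayPoint : ℕ → ℕ → ℝ := fun i _ => if i = 0 then 1 else 0

lemma sum_mul_mul_add_mul {ι : Type*} (s : Finset ι) (c u v : ι → ℝ) (a b : ℝ) :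
    ∑ x ∈ s, c x * (a * u x + b * v x) = a * ∑ x ∈ s, c x * u x + b * ∑ x ∈ s, c x * v x := by
  rw [mul_sum, mul_sum, ← sum_add_distrib]
  exact sum_congr rfl fun x _ => by ring

lemma sum_sum_mul_smul_add_smul {ι κ : Type*} (s : Finset ι) (T : Finset κ)
    (c y z : ι → κ → ℝ) (a b : ℝ) :
    ∑ i ∈ s, ∑ m ∈ T, c i m * (a • y + b • z) i m =
      a * ∑ i ∈ s, ∑ m ∈ T, c i m * y i m + b * ∑ i ∈ s, ∑ m ∈ T, c i m * z i m := by
  simp only [Pi.add_apply, Pi.smul_apply, smul_eq_mul, sum_mul_mul_add_mul]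
  rw [mul_sum, mul_sum, ← sum_add_distrib]

lemma sum_range_sum_mul_zeroDelayPoint (Q : ℕ) (T : Finset ℕ) (c : ℕ → ℕ → ℝ) :
    ∑ i ∈ range (Q + 1), ∑ m ∈ T, c i m * zeroDelayPoint i m = ∑ m ∈ T, c 0 m := by
  rw [sum_eq_single 0 (fun i _ hi => by simp [zeroDelayPoint, hi]) (by simp)]
  simp [zeroDelayPoint]

section

variable {Q M : ℕ} {α ξ : ℝ} {η Pw : ℕ → ℝ} {p q : ℝ} {y z : ℕ → ℕ → ℝ}

lemma avgDelay_smul_add_smul (a b : ℝ) :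
    avgDelay Q M α η (a • y + b • z) = a * avgDelay Q M α η y + b * avgDelay Q M α η z := by
  simp only [avgDelay, sum_sum_mul_smul_add_smul]
  ring

lemma avgDelay_zeroDelayPoint : avgDelay Q M α η zeroDelayPoint = 0 := by
  simp [avgDelay, sum_range_sum_mul_zeroDelayPoint]

lemma avgPower_congr (h : ∀ i ≤ Q, ∀ m ∈ Icc 1 M, y i m = z i m) :
    avgPower Q M α η Pw y = avgPower Q M α η Pw z := by
  unfold avgPower
  congr 1
  refine sum_congr rfl fun i hi => sum_congr rfl fun m hm => ?_
  rw [h i (Nat.lt_succ_iff.mp (mem_range.mp hi)) m hm]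

lemma avgPower_zeroDelayPoint :
    avgPower Q M α η Pw zeroDelayPoint = α * ∑ m ∈ Icc 1 M, η m * Pw m := by
  rw [avgPower, sum_range_sum_mul_zeroDelayPoint]

lemma LPfeasible.avgPower_le (hy : LPfeasible Q M α ξ η Pw p y) :
    avgPower Q M α η Pw y ≤ p :=
  hy.2.1

lemma LPfeasible.mono (hy : LPfeasible Q M α ξ η Pw p y) (hq : avgPower Q M α η Pw y ≤ q) :
    LPfeasible Q M α ξ η Pw q y :=
  ⟨hy.1, hq, hy.2.2⟩

lemma LPfeasible.smul_add_smul (hy : LPfeasible Q M α ξ η Pw p y)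
    (hz : LPfeasible Q M α ξ η Pw q z) {a b : ℝ} (ha : 0 ≤ a) (hb : 0 ≤ b) (hab : a + b = 1) :
    LPfeasible Q M α ξ η Pw (a * p + b * q) (a • y + b • z) := by
  obtain ⟨hyQ, hyP, hy1, hyc⟩ := hy
  obtain ⟨hzQ, hzP, hz1, hzc⟩ := hz
  refine ⟨fun m hm => ?_, ?_, ?_, fun i hi m hm => ?_⟩
  · simp [hyQ m hm, hzQ m hm]
  · rw [sum_sum_mul_smul_add_smul]
    linarith [mul_le_mul_of_nonneg_left hyP ha, mul_le_mul_of_nonneg_left hzP hb]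
  · rw [sum_sum_mul_smul_add_smul, hy1, hz1, mul_one, mul_one, hab]
  · obtain ⟨hy0, hyi⟩ := hyc i hi m hm
    obtain ⟨hz0, hzi⟩ := hzc i hi m hm
    simp only [Pi.add_apply, Pi.smul_apply, smul_eq_mul, sum_mul_mul_add_mul]
    constructor
    · positivity
    · linarith [mul_le_mul_of_nonneg_left hyi ha, mul_le_mul_of_nonneg_left hzi hb]

lemma zeroDelayPoint_LPfeasible (hηsum : ∑ m ∈ Icc 1 M, η m = 1) :
    LPfeasible Q M α ξ η Pw (α * ∑ m ∈ Icc 1 M, η m * Pw m) zeroDelayPoint := by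
  refine ⟨fun m _ => by simp [zeroDelayPoint], ?_, ?_, fun i _ m _ => ?_⟩
  · simp [sum_range_sum_mul_zeroDelayPoint]
  · simpa [sum_range_sum_mul_zeroDelayPoint] using hηsum
  · rcases eq_or_ne i 0 with rfl | hi
    · simp [zeroDelayPoint, hηsum]
    · simp [zeroDelayPoint, hi]

lemma LPfeasible.nonneg (hy : LPfeasible Q M α ξ η Pw p y) {i m : ℕ} (hi : i ≤ Q)
    (hm : m ∈ Icc 1 M) : 0 ≤ y i m :=
  (hy.2.2.2 i hi m hm).1

lemma LPfeasible.delay_term_nonneg (hy : LPfeasible Q M α ξ η Pw p y)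
    (hη : ∀ m ∈ Icc 1 M, 0 < η m) :
    ∀ i ∈ range (Q + 1), ∀ m ∈ Icc 1 M, 0 ≤ (i : ℝ) * η m * y i m := fun i hi m hm =>
  have := hy.nonneg (Nat.lt_succ_iff.mp (mem_range.mp hi)) hm
  have := hη m hm
  by positivity

lemma LPfeasible.avgDelay_nonneg (hy : LPfeasible Q M α ξ η Pw p y) (hα : 0 < α)
    (hη : ∀ m ∈ Icc 1 M, 0 < η m) : 0 ≤ avgDelay Q M α η y :=
  mul_nonneg (by positivity) <| sum_nonneg fun i hi =>
    sum_nonneg (hy.delay_term_nonneg hη i hi)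

lemma LPfeasible.eq_zero_of_avgDelay_eq_zero (hy : LPfeasible Q M α ξ η Pw p y) (hα : α ≠ 0)
    (hη : ∀ m ∈ Icc 1 M, 0 < η m) (hD : avgDelay Q M α η y = 0) :
    ∀ i, 1 ≤ i → i ≤ Q + 1 → ∀ m ∈ Icc 1 M, y i m = 0 := by
  intro i hi1 hiQ m hm
  rcases hiQ.lt_or_eq with hiQ | rfl
  · have hsum : ∑ i ∈ range (Q + 1), ∑ m ∈ Icc 1 M, (i : ℝ) * η m * y i m = 0 := by
      simpa [avgDelay, hα] using hD
    have hi : i ∈ range (Q + 1) := mem_range.mpr hiQ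
    have hterm := (sum_eq_zero_iff_of_nonneg (hy.delay_term_nonneg hη i hi)).mp
      ((sum_eq_zero_iff_of_nonneg fun i hi => sum_nonneg (hy.delay_term_nonneg hη i hi)).mp
        hsum i hi) m hm
    simpa [(hη m hm).ne', show i ≠ 0 by omega] using hterm
  · exact hy.1 m hm

lemma LPfeasible.eq_zeroDelayPoint_of_avgDelay_eq_zero (hy : LPfeasible Q M α ξ η Pw p y)
    (hα : α ≠ 0) (hη : ∀ m ∈ Icc 1 M, 0 < η m) (hηsum : ∑ m ∈ Icc 1 M, η m = 1)
    (hD : avgDelay Q M α η y = 0) :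
    ∀ i ≤ Q, ∀ m ∈ Icc 1 M, y i m = zeroDelayPoint i m := by
  have hhigh := hy.eq_zero_of_avgDelay_eq_zero hα hη hD
  have hmass : ∑ m ∈ Icc 1 M, η m * y 0 m = 1 := by
    rw [← hy.2.2.1, sum_eq_single 0 (fun i hi hi0 => sum_eq_zero fun m hm => by
      rw [hhigh i (by omega) (by simp at hi; omega) m hm, mul_zero]) (by simp)]
  have hle : ∀ m ∈ Icc 1 M, y 0 m ≤ 1 := by
    intro m hm
    have := (hy.2.2.2 0 (Nat.zero_le Q) m hm).2
    rwa [hmass, sum_eq_zero fun n hn => by rw [hhigh 1 le_rfl (by omega) n hn, mul_zero],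
      mul_zero, add_zero] at this
  have hone : ∀ m ∈ Icc 1 M, η m * y 0 m = η m * 1 := by
    refine (sum_eq_sum_iff_of_le fun m hm =>
      mul_le_mul_of_nonneg_left (hle m hm) (hη m hm).le).mp ?_
    simp [hmass, hηsum]
  intro i hi m hm
  rcases eq_or_ne i 0 with rfl | hi0
  · simpa [zeroDelayPoint, (hη m hm).ne'] using hone m hm
  · simpa [zeroDelayPoint, hi0] using hhigh i (by omega) (by omega) m hm

lemma LPfeasible.avgDelay_pos (hy : LPfeasible Q M α ξ η Pw p y) (hα : 0 < α)
    (hη : ∀ m ∈ Icc 1 M, 0 < η m) (hηsum : ∑ m ∈ Icc 1 M, η m = 1)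
    (hp : p < α * ∑ m ∈ Icc 1 M, η m * Pw m) : 0 < avgDelay Q M α η y := by
  refine (hy.avgDelay_nonneg hα hη).lt_of_ne' fun hD => hp.not_ge ?_
  rw [← avgPower_zeroDelayPoint (Q := Q),
    ← avgPower_congr (hy.eq_zeroDelayPoint_of_avgDelay_eq_zero hα.ne' hη hηsum hD)]
  exact hy.avgPower_le

end

theorem power_constraint_tight_at_optimum_general
    (Q M : ℕ)
    (α : ℝ) (hα0 : 0 < α)
    (ξ : ℝ)
    (η Pw : ℕ → ℝ) (hη : ∀ m ∈ Finset.Icc 1 M, 0 < η m)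
    (hηsum : ∑ m ∈ Finset.Icc 1 M, η m = 1)
    (pmax : ℝ)
    (Pth : ℝ) (hPth : Pth = α * ∑ m ∈ Finset.Icc 1 M, η m * Pw m)
    (hlt : pmax < Pth)
    (y : ℕ → ℕ → ℝ)
    (hfeas : LPfeasible Q M α ξ η Pw pmax y)
    (hopt : ∀ z, LPfeasible Q M α ξ η Pw pmax z →
      avgDelay Q M α η y ≤ avgDelay Q M α η z) :
    avgPower Q M α η Pw y = pmax := by
  by_contra hne
  set S := avgPower Q M α η Pw y
  have hSlt : S < pmax := hfeas.avgPower_le.lt_of_ne hne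
  set t := (pmax - S) / (Pth - S)
  have ht0 : 0 < t := div_pos (by linarith) (by linarith)
  have ht1 : t < 1 := (div_lt_one (by linarith)).mpr (by linarith)
  have htP : (1 - t) * S + t * Pth = pmax := by
    simp only [t]
    field_simp [(by linarith : Pth - S ≠ 0)]
    ring
  have hz : LPfeasible Q M α ξ η Pw pmax ((1 - t) • y + t • zeroDelayPoint) := by
    rw [← htP, hPth]
    exact (hfeas.mono le_rfl).smul_add_smul (zeroDelayPoint_LPfeasible hηsum)
      (by linarith) ht0.le (by ring)
  have hD := hopt _ hz
  rw [avgDelay_smul_add_smul, avgDelay_zeroDelayPoint] at hD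
  have hDpos := hfeas.avgDelay_pos hα0 hη hηsum (hPth ▸ hlt)
  linarith [mul_pos ht0 hDpos]

theorem power_constraint_tight_at_optimum
    (Q M : ℕ) (hQ : 1 ≤ Q) (hM : 1 ≤ M)
    (α : ℝ) (hα0 : 0 < α) (hα1 : α < 1)
    (ξ : ℝ) (hξ : ξ = (1 - α) / α)
    (η Pw : ℕ → ℝ) (hη : ∀ m ∈ Finset.Icc 1 M, 0 < η m)
    (hηsum : ∑ m ∈ Finset.Icc 1 M, η m = 1)
    (hP1 : 0 < Pw 1) (hPmono : ∀ m, 1 ≤ m → m < M → Pw m ≤ Pw (m + 1))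
    (pmax : ℝ) (hpmax : 0 < pmax)
    (Pth : ℝ) (hPth : Pth = α * ∑ m ∈ Finset.Icc 1 M, η m * Pw m)
    (hlt : pmax < Pth)
    (y : ℕ → ℕ → ℝ)
    (hfeas : LPfeasible Q M α ξ η Pw pmax y)
    (hopt : ∀ z, LPfeasible Q M α ξ η Pw pmax z →
      avgDelay Q M α η y ≤ avgDelay Q M α η z) :
    avgPower Q M α η Pw y = pmax :=
  power_constraint_tight_at_optimum_general Q M α hα0 ξ η Pw hη hηsum pmax Pth hPth hlt y hfeas hopt
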